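/- Let μ > 0 and let ψ : [0, ∞) → ℓ² be a solution of the AL lattice. Then the deformed power is conserved: P_μ(ψ(t)) = P_μ(ψ(0)) for every t ≥ 0. -/

import Mathlib

/-!
With the current `j_n = Im (conj ψ_n * ψ_{n+1})`, the AL equation gives the local conservation law
`d/dt ln (1 + μ|ψ_n|²) = -2μ (j_n - j_{n-1})`: the factor `1 + μ|ψ_n|²` of the nonlinearity cancels
the denominator produced by differentiating the logarithm. Integrating over `[a, b]`, the change
of the `n`-th term is a discrete divergence of the time-integrated flux, so its sum over `n`
telescopes to the flux at `±∞`, which vanishes by dominated convergence because `ψ(s) ∈ ℓ²`.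
-/

open Set

noncomputable section

/-- The Hilbert space ℓ² of square-summable sequences of complex numbers indexed by ℤ. -/
abbrev l2 : Type := lp (fun _ : ℤ => ℂ) 2

/-- `ψ : I → ℓ²` is a solution of the Ablowitz–Ladik lattice
`i ψ̇ₙ + (ψₙ₊₁ + ψₙ₋₁) + μ|ψₙ|²(ψₙ₊₁ + ψₙ₋₁) = 0` on the set `s`, with derivative curve `ψ'`:
it is continuously differentiable and satisfies the equation componentwise. -/
def IsALSol (μ : ℝ) (s : Set ℝ) (ψ ψ' : ℝ → l2) : Prop :=
  (∀ t ∈ s, HasDerivWithinAt ψ (ψ' t) s t) ∧ ContinuousOn ψ' s ∧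
    ∀ t ∈ s, ∀ n : ℤ,
      Complex.I * (ψ' t) n + ((ψ t) (n + 1) + (ψ t) (n - 1))
        + (μ * ‖(ψ t) n‖ ^ 2 : ℝ) * ((ψ t) (n + 1) + (ψ t) (n - 1)) = 0

/-- The deformed power `P_μ(ψ) = Σₙ ln(1 + μ|ψₙ|²)`. -/
def Pdef (μ : ℝ) (ψ : l2) : ℝ := ∑' n : ℤ, Real.log (1 + μ * ‖ψ n‖ ^ 2)

open Filter Topology
open scoped InnerProductSpace

theorem Finset.sum_Icc_int_sub_pred {G : Type*} [AddCommGroup G] (c : ℤ → G) {a b : ℤ}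
    (hab : a - 1 ≤ b) : ∑ n ∈ Finset.Icc a b, (c n - c (n - 1)) = c b - c (a - 1) := by
  induction b, hab using Int.leInduction with
  | base => simp
  | succ b hab ih =>
    rw [← Finset.insert_Icc_right_eq_Icc_add_one (by omega), Finset.sum_insert (by simp), ih,
      add_sub_cancel_right]
    abel

theorem tsum_eq_zero_of_eq_sub_int_pred {G : Type*} [AddCommGroup G] [TopologicalSpace G]
    [IsTopologicalAddGroup G] [T2Space G] {f c : ℤ → G} (hf : Summable f)
    (hc : Tendsto c cofinite (𝓝 0)) (h : ∀ n, f n = c n - c (n - 1)) : ∑' n, f n = 0 := by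
  have hpartial : Tendsto (fun N : ℤ ↦ ∑ n ∈ Finset.Icc (-N) N, f n) atTop (𝓝 (∑' n, f n)) :=
    hf.hasSum.comp Finset.tendsto_Icc_neg_atTop_atTop
  have hshift : Tendsto (fun N : ℤ ↦ -N - 1) atTop cofinite :=
    (sub_left_injective.comp neg_injective).tendsto_cofinite.comp atTop_le_cofinite
  have hends : Tendsto (fun N : ℤ ↦ c N - c (-N - 1)) atTop (𝓝 0) := by
    have := (hc.mono_left atTop_le_cofinite).sub (hc.comp hshift)
    rwa [sub_zero] at this
  refine tendsto_nhds_unique hpartial (hends.congr' ?_)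
  filter_upwards [eventually_ge_atTop 0] with N hN
  simp only [h, Finset.sum_Icc_int_sub_pred c (a := -N) (b := N) (by omega)]

theorem lp.summable_norm_sq {α : Type*} {E : α → Type*} [∀ i, NormedAddCommGroup (E i)]
    (f : lp E 2) : Summable fun i ↦ ‖f i‖ ^ 2 := by
  simpa using (lp.memℓp f).summable (p := 2) (by norm_num)

theorem lp.tendsto_norm_apply_cofinite_zero {α : Type*} {E : α → Type*}
    [∀ i, NormedAddCommGroup (E i)] {p : ENNReal} (hp : 0 < p.toReal) (f : lp E p) :
    Tendsto (fun i ↦ ‖f i‖) cofinite (𝓝 0) := by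
  have h := (((lp.memℓp f).summable hp).tendsto_cofinite_zero).rpow_const
    (p := p.toReal⁻¹) (Or.inr (by positivity))
  rw [Real.zero_rpow (inv_ne_zero hp.ne')] at h
  refine h.congr fun i ↦ ?_
  rw [← Real.rpow_mul (norm_nonneg _), mul_inv_cancel₀ hp.ne', Real.rpow_one]

theorem lp.continuous_apply {α : Type*} {E : α → Type*} [∀ i, NormedAddCommGroup (E i)]
    {p : ENNReal} [Fact (1 ≤ p)] (i : α) : Continuous fun f : lp E p ↦ f i :=
  (_root_.continuous_apply i).comp lp.uniformContinuous_coe.continuous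

theorem summable_log_one_add_mul_norm_sq (μ : ℝ) (φ : l2) :
    Summable fun n ↦ Real.log (1 + μ * ‖φ n‖ ^ 2) :=
  Real.summable_log_one_add_of_summable ((lp.summable_norm_sq φ).mul_left μ)

theorem HasDerivWithinAt.log_one_add_mul_norm_sq {F : Type*} [NormedAddCommGroup F]
    [InnerProductSpace ℝ F] {f : ℝ → F} {f' : F} {s : Set ℝ} {x μ : ℝ}
    (hf : HasDerivWithinAt f f' s x) (hμ : 0 ≤ μ) :
    HasDerivWithinAt (fun u ↦ Real.log (1 + μ * ‖f u‖ ^ 2))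
      (μ * (2 * ⟪f x, f'⟫_ℝ) / (1 + μ * ‖f x‖ ^ 2)) s x :=
  ((hf.norm_sq.const_mul μ).const_add 1).log (by positivity)

def alCurrent (φ : l2) (n : ℤ) : ℝ := (starRingEnd ℂ (φ n) * φ (n + 1)).im

theorem alCurrent_sub_alCurrent_pred (φ : l2) (n : ℤ) :
    alCurrent φ n - alCurrent φ (n - 1) = (starRingEnd ℂ (φ n) * (φ (n + 1) + φ (n - 1))).im := by
  simp only [alCurrent, sub_add_cancel, mul_add, Complex.add_im, Complex.mul_im,
    Complex.conj_re, Complex.conj_im]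
  ring

theorem abs_alCurrent_le (φ : l2) (n : ℤ) : |alCurrent φ n| ≤ ‖φ n‖ * ‖φ‖ :=
  calc |alCurrent φ n| ≤ ‖starRingEnd ℂ (φ n) * φ (n + 1)‖ := Complex.abs_im_le_norm _
    _ = ‖φ n‖ * ‖φ (n + 1)‖ := by rw [norm_mul, Complex.norm_conj]
    _ ≤ ‖φ n‖ * ‖φ‖ := by gcongr; exact lp.norm_apply_le_norm two_ne_zero φ _

theorem continuous_alCurrent (n : ℤ) : Continuous fun φ : l2 ↦ alCurrent φ n :=
  Complex.continuous_im.comp <|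
    (Complex.continuous_conj.comp (lp.continuous_apply n)).mul (lp.continuous_apply (n + 1))

theorem tendsto_alCurrent_cofinite (φ : l2) : Tendsto (alCurrent φ) cofinite (𝓝 0) :=
  squeeze_zero_norm (fun n ↦ (Real.norm_eq_abs _).trans_le (abs_alCurrent_le φ n))
    (by simpa using (lp.tendsto_norm_apply_cofinite_zero (by norm_num) φ).mul_const ‖φ‖)

theorem tendsto_integral_alCurrent_cofinite {ψ : ℝ → l2} {a b : ℝ}
    (hψ : ContinuousOn ψ (uIcc a b)) :
    Tendsto (fun n ↦ ∫ s in a..b, alCurrent (ψ s) n) cofinite (𝓝 0) := by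
  have : (cofinite : Filter ℤ).IsCountablyGenerated := by rw [Int.cofinite_eq]; infer_instance
  have hcont (n : ℤ) : ContinuousOn (fun s ↦ alCurrent (ψ s) n) (uIcc a b) :=
    (continuous_alCurrent n).comp_continuousOn hψ
  have hbound (n : ℤ) (s : ℝ) : ‖alCurrent (ψ s) n‖ ≤ ‖ψ s‖ * ‖ψ s‖ :=
    (abs_alCurrent_le _ n).trans <|
      mul_le_mul_of_nonneg_right (lp.norm_apply_le_norm two_ne_zero _ n) (norm_nonneg _)
  simpa using intervalIntegral.tendsto_integral_filter_of_dominated_convergence _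
    (Eventually.of_forall fun n ↦
      ((hcont n).mono uIoc_subset_uIcc).aestronglyMeasurable measurableSet_uIoc)
    (Eventually.of_forall fun n ↦ MeasureTheory.ae_of_all _ fun s _ ↦ hbound n s)
    (hψ.norm.mul hψ.norm).intervalIntegrable
    (MeasureTheory.ae_of_all _ fun s _ ↦ tendsto_alCurrent_cofinite (ψ s))

namespace IsALSol

variable {μ : ℝ} {s : Set ℝ} {ψ ψ' : ℝ → l2}

theorem mono {s' : Set ℝ} (h : IsALSol μ s ψ ψ') (hs' : s' ⊆ s) : IsALSol μ s' ψ ψ' :=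
  ⟨fun t ht ↦ (h.1 t (hs' ht)).mono hs', h.2.1.mono hs', fun t ht ↦ h.2.2 t (hs' ht)⟩

theorem continuousOn (h : IsALSol μ s ψ ψ') : ContinuousOn ψ s :=
  fun t ht ↦ (h.1 t ht).continuousWithinAt

theorem hasDerivWithinAt_apply (h : IsALSol μ s ψ ψ') {t : ℝ} (ht : t ∈ s) (n : ℤ) :
    HasDerivWithinAt (fun u ↦ ψ u n) (ψ' t n) s t :=
  (lp.evalCLM ℝ (fun _ : ℤ ↦ ℂ) 2 n).hasFDerivAt.comp_hasDerivWithinAt t (h.1 t ht)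

theorem deriv_apply_eq (h : IsALSol μ s ψ ψ') {t : ℝ} (ht : t ∈ s) (n : ℤ) :
    ψ' t n = Complex.I * (1 + μ * ‖ψ t n‖ ^ 2 : ℝ) * (ψ t (n + 1) + ψ t (n - 1)) := by
  have hsol := h.2.2 t ht n
  push_cast at hsol ⊢
  linear_combination (-Complex.I) * hsol + ψ' t n * Complex.I_sq

theorem hasDerivWithinAt_log (hμ : 0 ≤ μ) (h : IsALSol μ s ψ ψ') {t : ℝ} (ht : t ∈ s) (n : ℤ) :
    HasDerivWithinAt (fun u ↦ Real.log (1 + μ * ‖ψ u n‖ ^ 2))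
      (-(2 * μ) * (alCurrent (ψ t) n - alCurrent (ψ t) (n - 1))) s t := by
  convert (h.hasDerivWithinAt_apply ht n).log_one_add_mul_norm_sq hμ using 1
  have hpos : 0 < 1 + μ * ‖ψ t n‖ ^ 2 := by positivity
  rw [h.deriv_apply_eq ht n, alCurrent_sub_alCurrent_pred, Complex.inner]
  field_simp
  simp only [Complex.mul_re, Complex.mul_im, Complex.I_re, Complex.I_im, Complex.ofReal_re,
    Complex.ofReal_im]
  ring

theorem log_sub_eq_integral (hμ : 0 ≤ μ) {a b : ℝ} (h : IsALSol μ (Icc a b) ψ ψ') (hab : a ≤ b)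
    (n : ℤ) :
    Real.log (1 + μ * ‖ψ b n‖ ^ 2) - Real.log (1 + μ * ‖ψ a n‖ ^ 2) =
      -(2 * μ) * ((∫ s in a..b, alCurrent (ψ s) n) - ∫ s in a..b, alCurrent (ψ s) (n - 1)) := by
  have hcont (m : ℤ) : ContinuousOn (fun s ↦ alCurrent (ψ s) m) (uIcc a b) :=
    (continuous_alCurrent m).comp_continuousOn (uIcc_of_le hab ▸ h.continuousOn)
  rw [← intervalIntegral.integral_sub (hcont n).intervalIntegrable (hcont _).intervalIntegrable,
    ← intervalIntegral.integral_const_mul]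
  exact (intervalIntegral.integral_eq_sub_of_hasDerivAt_of_le hab
    (fun t ht ↦ (h.hasDerivWithinAt_log hμ ht n).continuousWithinAt)
    (fun t ht ↦ (h.hasDerivWithinAt_log hμ (Ioo_subset_Icc_self ht) n).hasDerivAt
      (Icc_mem_nhds ht.1 ht.2))
    (continuousOn_const.mul ((hcont n).sub (hcont _))).intervalIntegrable).symm

theorem pdef_eq_of_le (hμ : 0 ≤ μ) {a b : ℝ} (h : IsALSol μ (Icc a b) ψ ψ') (hab : a ≤ b) :
    Pdef μ (ψ b) = Pdef μ (ψ a) := by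
  have hflux : Tendsto (fun n ↦ -(2 * μ) * ∫ s in a..b, alCurrent (ψ s) n) cofinite (𝓝 0) := by
    simpa using (tendsto_integral_alCurrent_cofinite
      (uIcc_of_le hab ▸ h.continuousOn)).const_mul (-(2 * μ))
  rw [← sub_eq_zero, Pdef, Pdef, ← (summable_log_one_add_mul_norm_sq μ _).tsum_sub
    (summable_log_one_add_mul_norm_sq μ _)]
  refine tsum_eq_zero_of_eq_sub_int_pred ((summable_log_one_add_mul_norm_sq μ _).sub
    (summable_log_one_add_mul_norm_sq μ _)) hflux fun n ↦ ?_
  rw [h.log_sub_eq_integral hμ hab n, mul_sub]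

end IsALSol

/-- The deformed power `P_μ` is conserved along solutions of the AL lattice. -/
theorem AL_deformed_power_conserved (μ : ℝ) (hμ : 0 < μ) (ψ ψ' : ℝ → l2)
    (hψ : IsALSol μ (Ici 0) ψ ψ') :
    ∀ t : ℝ, 0 ≤ t → Pdef μ (ψ t) = Pdef μ (ψ 0) :=
  fun _ ht ↦ (hψ.mono Icc_subset_Ici_self).pdef_eq_of_le hμ.le ht
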